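/- Let V be a finite-dimensional real inner product space, A : V → V linear with ⟨Av, v⟩ = 0 for all v, H : V → ℝ differentiable, τ > 0, and suppose z⁰, z¹ ∈ V satisfy the Poisson integrator equation (z¹ − z⁰)/τ = A(∫₀¹ ∇H(z⁰ + s(z¹ − z⁰)) ds). Then H(z¹) = H(z⁰). -/

import Mathlib

open scoped RealInnerProductSpace
open MeasureTheory intervalIntegral InnerProductSpace

section Gradient

variable {V : Type*} [NormedAddCommGroup V] [InnerProductSpace ℝ V] [CompleteSpace V]

theorem HasGradientAt.hasDerivAt_comp_line {H : V → ℝ} {g x v : V} {t : ℝ}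
    (hH : HasGradientAt H g (x + t • v)) :
    HasDerivAt (fun s : ℝ => H (x + s • v)) ⟪v, g⟫ t := by
  have hline : HasDerivAt (fun s : ℝ => x + s • v) v t := by
    simpa using ((hasDerivAt_id t).smul_const v).const_add x
  simpa [toDual_apply_apply, real_inner_comm, Function.comp_def] using
    hH.hasFDerivAt.comp_hasDerivAt t hline

theorem sub_eq_inner_integral_gradient {H : V → ℝ} {x v : V}
    (hH : ∀ s ∈ Set.uIcc (0 : ℝ) 1, DifferentiableAt ℝ H (x + s • v))
    (hint : IntervalIntegrable (fun s => gradient H (x + s • v)) volume 0 1) :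
    H (x + v) - H x = ⟪v, ∫ s in (0 : ℝ)..1, gradient H (x + s • v)⟫ := by
  have hderiv : ∀ s ∈ Set.uIcc (0 : ℝ) 1,
      HasDerivAt (fun t : ℝ => H (x + t • v)) ⟪v, gradient H (x + s • v)⟫ s :=
    fun s hs => (hH s hs).hasGradientAt.hasDerivAt_comp_line
  have hftc := integral_eq_sub_of_hasDerivAt hderiv
    ⟨hint.1.const_inner v, hint.2.const_inner v⟩
  have hcomm := (innerSL ℝ v).intervalIntegral_comp_comm hint
  simp only [innerSL_apply_apply] at hcomm
  rw [← hcomm, hftc, one_smul, zero_smul, add_zero]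

end Gradient

theorem stmt10 (V : Type*) [NormedAddCommGroup V] [InnerProductSpace ℝ V]
    [FiniteDimensional ℝ V] (A : V →ₗ[ℝ] V) (hA : ∀ v : V, ⟪A v, v⟫ = 0)
    (H : V → ℝ) (hH : Differentiable ℝ H) (τ : ℝ) (hτ : 0 < τ) (z0 z1 : V)
    (heq : (1 / τ) • (z1 - z0) =
      A (∫ s in (0:ℝ)..1, gradient H (z0 + s • (z1 - z0)))) :
    H z1 = H z0 := by
  set w := ∫ s in (0:ℝ)..1, gradient H (z0 + s • (z1 - z0))
  have hstep : z1 - z0 = τ • A w := by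
    rw [← heq, smul_smul, mul_one_div_cancel hτ.ne', one_smul]
  by_cases hint : IntervalIntegrable (fun s => gradient H (z0 + s • (z1 - z0))) volume 0 1
  · have hftc := sub_eq_inner_integral_gradient (fun s _ => hH _) hint
    have hskew : ⟪z1 - z0, w⟫ = 0 := by rw [hstep, real_inner_smul_left, hA, mul_zero]
    rw [add_sub_cancel] at hftc
    linarith
  · -- the Bochner integral of a non-integrable function is `0`, so the step vanishes
    have hw : w = 0 := integral_undef hint
    rw [hw, map_zero, smul_zero, sub_eq_zero] at hstep
    rw [hstep]
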